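/- arXiv:2102.05513 — 2 statements merged into one kernel-verified Lean document; each statement's English description precedes it below -/
import Mathlib

section
/- Let d ≥ 1 and z, w, u ∈ ℝ^d with |u| = 1 and u·z = 0. Suppose there exists τ > 0 and r > 0 with |z - τw| ≤ r, and suppose |z| ≥ 2r and |w| ≤ M. Then |u·w| ≤ 2rM/|z|. -/
/-! Pairing `z - τ • w` with the unit vector `u ⊥ z` gives `τ |⟪u, w⟫| ≤ r`, while the reverse
triangle inequality and `‖z‖ ≥ 2r` give `‖z‖ ≤ 2τ‖w‖`. Eliminating the unknown time `τ`
yields `|⟪u, w⟫| ‖z‖ ≤ 2 r ‖w‖`. -/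

open scoped InnerProductSpace

variable {E : Type*} [NormedAddCommGroup E] [InnerProductSpace ℝ E]

theorem mul_abs_inner_le_of_inner_eq_zero {u z w : E} {τ : ℝ} (hτ : 0 ≤ τ)
    (huz : ⟪u, z⟫_ℝ = 0) : τ * |⟪u, w⟫_ℝ| ≤ ‖u‖ * ‖z - τ • w‖ := by
  have hpair : ⟪u, z - τ • w⟫_ℝ = -(τ * ⟪u, w⟫_ℝ) := by
    rw [inner_sub_right, inner_smul_right, huz, zero_sub]
  calc τ * |⟪u, w⟫_ℝ| = |⟪u, z - τ • w⟫_ℝ| := by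
        rw [hpair, abs_neg, abs_mul, abs_of_nonneg hτ]
    _ ≤ ‖u‖ * ‖z - τ • w‖ := abs_real_inner_le_norm u _

theorem norm_le_two_mul_of_norm_sub_smul_le {z w : E} {τ r : ℝ} (hτ : 0 ≤ τ)
    (hzw : ‖z - τ • w‖ ≤ r) (hz : 2 * r ≤ ‖z‖) : ‖z‖ ≤ 2 * τ * ‖w‖ := by
  have htriangle := norm_le_norm_add_norm_sub' z (τ • w)
  rw [norm_smul, Real.norm_of_nonneg hτ] at htriangle
  linarith

theorem abs_inner_mul_norm_le_of_norm_sub_smul_le {u z w : E} {τ r M : ℝ} (hu : ‖u‖ ≤ 1)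
    (huz : ⟪u, z⟫_ℝ = 0) (hτ : 0 ≤ τ) (hzw : ‖z - τ • w‖ ≤ r) (hz : 2 * r ≤ ‖z‖)
    (hw : ‖w‖ ≤ M) : |⟪u, w⟫_ℝ| * ‖z‖ ≤ 2 * r * M := by
  have hM : 0 ≤ M := (norm_nonneg w).trans hw
  have htime : τ * |⟪u, w⟫_ℝ| ≤ r :=
    (mul_abs_inner_le_of_inner_eq_zero hτ huz).trans
      ((mul_le_of_le_one_left (norm_nonneg _) hu).trans hzw)
  have hz_le : ‖z‖ ≤ 2 * τ * M :=
    (norm_le_two_mul_of_norm_sub_smul_le hτ hzw hz).trans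
      (mul_le_mul_of_nonneg_left hw (by positivity))
  calc |⟪u, w⟫_ℝ| * ‖z‖ ≤ |⟪u, w⟫_ℝ| * (2 * τ * M) :=
        mul_le_mul_of_nonneg_left hz_le (abs_nonneg _)
    _ = 2 * M * (τ * |⟪u, w⟫_ℝ|) := by ring
    _ ≤ 2 * M * r := mul_le_mul_of_nonneg_left htime (by positivity)
    _ = 2 * r * M := by ring

theorem stmt_5_general (d : ℕ) (z w u : EuclideanSpace ℝ (Fin d)) (M r : ℝ)
    (hu : ‖u‖ = 1) (huz : (inner ℝ u z : ℝ) = 0)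
    (hr : 0 < r) (h : ∃ τ > (0 : ℝ), ‖z - τ • w‖ ≤ r)
    (hz : 2 * r ≤ ‖z‖) (hw : ‖w‖ ≤ M) :
    |(inner ℝ u w : ℝ)| ≤ 2 * r * M / ‖z‖ := by
  obtain ⟨τ, hτ, hzw⟩ := h
  rw [le_div_iff₀ (by linarith)]
  exact abs_inner_mul_norm_le_of_norm_sub_smul_le hu.le huz hτ.le hzw hz hw

/-- Quantitative core of the Shooting Lemma: if the relative velocity `w`
(bounded by `M`) transports `z` into the ball of radius `r` around the origin
at some positive time, and `|z| ≥ 2r`, then the component of `w` orthogonal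
to `z` is at most `2rM/|z|`. -/
theorem stmt_5 (d : ℕ) (hd : 1 ≤ d) (z w u : EuclideanSpace ℝ (Fin d)) (M r : ℝ)
    (hu : ‖u‖ = 1) (huz : (inner ℝ u z : ℝ) = 0)
    (hr : 0 < r) (h : ∃ τ > (0 : ℝ), ‖z - τ • w‖ ≤ r)
    (hz : 2 * r ≤ ‖z‖) (hw : ‖w‖ ≤ M) :
    |(inner ℝ u w : ℝ)| ≤ 2 * r * M / ‖z‖ :=
  stmt_5_general d z w u M r hu huz hr h hz hw
end

section
/- For all real x with -1 ≤ x ≤ -2/3, one has π - √(3(x+1)) ≤ arccos(x) ≤ π - √(2(x+1)). -/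
/-
Substituting `y = -x` and using `arccos x = π - arccos (-x)`, the claim becomes
`√(2(1 - y)) ≤ arccos y ≤ √(3(1 - y))` for `2/3 ≤ y ≤ 1`. Since `arccos` is antitone and inverts
`cos` on `[0, π]`, both bounds follow from the quadratic estimates
`1 - s²/2 ≤ cos s` and, for `|t| ≤ 1`, `cos t ≤ 1 - t²/3`.
-/

open Real

namespace Real

/-- The fourth-order Taylor remainder `5 t⁴/96` is at most `t²/6` when `|t| ≤ 1`. -/
lemma cos_le_one_sub_sq_div_three {t : ℝ} (ht : |t| ≤ 1) : cos t ≤ 1 - t ^ 2 / 3 := by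
  have hbound := (abs_le.mp (cos_bound ht)).2
  have hsq : t ^ 2 ≤ 1 := by nlinarith [sq_abs t, abs_nonneg t]
  rw [pow_abs, show t ^ 4 = (t ^ 2) ^ 2 by ring, abs_of_nonneg (by positivity)] at hbound
  nlinarith [sq_nonneg t]

lemma sqrt_two_mul_one_sub_le_arccos {y : ℝ} (hy₁ : -1 ≤ y) (hy₂ : y ≤ 1) :
    √(2 * (1 - y)) ≤ arccos y := by
  set s := √(2 * (1 - y))
  have hs_sq : s ^ 2 = 2 * (1 - y) := sq_sqrt (by linarith)
  have hs_le_pi : s ≤ π := by nlinarith [sqrt_nonneg (2 * (1 - y)), pi_gt_three]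
  have hcos : y ≤ cos s := by linarith [one_sub_sq_div_two_le_cos (x := s)]
  calc s = arccos (cos s) := (arccos_cos (sqrt_nonneg _) hs_le_pi).symm
    _ ≤ arccos y := arccos_le_arccos hcos

lemma arccos_le_sqrt_three_mul_one_sub {y : ℝ} (hy₁ : 2 / 3 ≤ y) (hy₂ : y ≤ 1) :
    arccos y ≤ √(3 * (1 - y)) := by
  set t := √(3 * (1 - y))
  have ht_nonneg : 0 ≤ t := sqrt_nonneg _
  have ht_sq : t ^ 2 = 3 * (1 - y) := sq_sqrt (by linarith)
  have ht_le_one : t ≤ 1 := by nlinarith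
  have hcos : cos t ≤ y := by
    linarith [cos_le_one_sub_sq_div_three (abs_le.mpr ⟨by linarith, ht_le_one⟩)]
  calc arccos y ≤ arccos (cos t) := arccos_le_arccos hcos
    _ = t := arccos_cos ht_nonneg (by linarith [pi_gt_three])

end Real

/-- Two-sided square-root estimate for `arccos` near `-1`:
for `-1 ≤ x ≤ -2/3`, `π - √(3(x+1)) ≤ arccos x ≤ π - √(2(x+1))`. -/
theorem stmt_7 (x : ℝ) (hx₁ : -1 ≤ x) (hx₂ : x ≤ -2/3) :
    Real.pi - Real.sqrt (3 * (x + 1)) ≤ Real.arccos x ∧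
    Real.arccos x ≤ Real.pi - Real.sqrt (2 * (x + 1)) := by
  have harccos : arccos x = π - arccos (-x) := by rw [arccos_neg, sub_sub_cancel]
  have hlower := sqrt_two_mul_one_sub_le_arccos (y := -x) (by linarith) (by linarith)
  have hupper := arccos_le_sqrt_three_mul_one_sub (y := -x) (by linarith) (by linarith)
  rw [sub_neg_eq_add, add_comm 1] at hlower hupper
  constructor <;> linarith
end
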